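/- Let p be an odd prime. Then p · ∑_{k=1}^{p-1} 4^k / ((2k+1)·C(2k,k)) ≡ 0 (mod p²). -/

import Mathlib

/-!
With `f k = 4 ^ k / C(2k, k)`, the identity `(k + 1) C(2k+2, k+1) = 2 (2k + 1) C(2k, k)` gives
`f (k + 1) - f k = 4 ^ k / ((2k + 1) C(2k, k))`, so the sum telescopes to `4 ^ p / C(2p, p) - 2`.
By Lucas, `C(2p, p) ≡ C(2, 1) = 2 (mod p)`, a unit for odd `p`, and by Fermat `4 ^ p ≡ 4`; hence
`4 ^ p - 2 C(2p, p)` is divisible by `p`, and so is `4 ^ p / C(2p, p) - 2` in `ℤ_[p]`.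
-/

open Finset

section Telescoping

variable {K : Type*} [Field K] [CharZero K]

lemma four_pow_div_centralBinom_succ_sub (k : ℕ) :
    (4 : K) ^ (k + 1) / (k + 1).centralBinom - 4 ^ k / k.centralBinom =
      4 ^ k / ((2 * k + 1) * k.centralBinom) := by
  have hrec : ((k + 1 : ℕ) : K) * (k + 1).centralBinom = 2 * (2 * k + 1) * k.centralBinom := by
    exact_mod_cast Nat.succ_mul_centralBinom_succ k
  have hC : (k.centralBinom : K) ≠ 0 := Nat.cast_ne_zero.2 k.centralBinom_ne_zero
  have hC' : ((k + 1).centralBinom : K) ≠ 0 := Nat.cast_ne_zero.2 (k + 1).centralBinom_ne_zero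
  have hodd : (2 * k + 1 : K) ≠ 0 := by exact_mod_cast (2 * k).succ_ne_zero
  push_cast at hrec
  field_simp
  linear_combination -2 * (4 : K) ^ k * hrec

lemma sum_Icc_four_pow_div_mul_choose (n : ℕ) :
    ∑ k ∈ Icc 1 n, (4 : K) ^ k / ((2 * (k : K) + 1) * ((2 * k).choose k : K)) =
      4 ^ (n + 1) / (n + 1).centralBinom - 2 := by
  simp_rw [← Nat.centralBinom_eq_two_mul_choose, ← four_pow_div_centralBinom_succ_sub,
    ← Ico_add_one_right_eq_Icc]
  rw [sum_Ico_sub (f := fun k ↦ (4 : K) ^ k / k.centralBinom) (by omega)]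
  norm_num [Nat.centralBinom]

end Telescoping

lemma Nat.centralBinom_modEq_two (p : ℕ) [Fact p.Prime] : p.centralBinom ≡ 2 [MOD p] := by
  simpa [Nat.centralBinom, mul_comm] using
    Choose.choose_mul_mul_modEq_choose_nat (p := p) (a := 2) (b := 1)

lemma Nat.coprime_centralBinom_self_of_odd {p : ℕ} [Fact p.Prime] (hp : Odd p) :
    p.Coprime p.centralBinom := by
  have two_lt : 2 < p := (Fact.out : p.Prime).two_le.lt_of_ne' <| by
    rintro rfl
    exact Nat.not_odd_iff_even.2 even_two hp
  rw [Nat.Prime.coprime_iff_not_dvd Fact.out, Nat.dvd_iff_mod_eq_zero, p.centralBinom_modEq_two,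
    Nat.mod_eq_of_lt two_lt]
  exact two_ne_zero

lemma natCast_dvd_four_pow_sub_two_mul_centralBinom (p : ℕ) [Fact p.Prime] :
    (p : ℤ) ∣ 4 ^ p - 2 * p.centralBinom := by
  rw [← ZMod.intCast_zmod_eq_zero_iff_dvd]
  push_cast
  rw [(ZMod.natCast_eq_natCast_iff _ _ _).2 p.centralBinom_modEq_two, ZMod.pow_card]
  norm_num

lemma Padic.exists_padicInt_eq_intCast_div_natCast {p : ℕ} [Fact p.Prime] (a : ℤ) {b : ℕ}
    (hb : p.Coprime b) : ∃ c : ℤ_[p], (c : ℚ_[p]) = a / b :=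
  ⟨⟨a / b, by
    rw [norm_div, Padic.norm_natCast_eq_one_iff.2 hb, div_one]
    exact norm_int_le_one a⟩, rfl⟩

theorem stmt6 (p : ℕ) [Fact p.Prime] (hp : Odd p) :
    ∃ c : ℤ_[p],
      (p : ℚ_[p]) * (∑ k ∈ Finset.Icc 1 (p - 1),
          (4 : ℚ_[p]) ^ k / ((2 * (k : ℚ_[p]) + 1) * (Nat.choose (2 * k) k : ℚ_[p]))) =
      (p : ℚ_[p]) ^ 2 * (c : ℚ_[p]) := by
  obtain ⟨m, hm⟩ := natCast_dvd_four_pow_sub_two_mul_centralBinom p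
  obtain ⟨c, hc⟩ := Padic.exists_padicInt_eq_intCast_div_natCast m (Nat.coprime_centralBinom_self_of_odd hp)
  refine ⟨c, ?_⟩
  have hm' : (4 : ℚ_[p]) ^ p - 2 * p.centralBinom = p * m := mod_cast hm
  have hC : (p.centralBinom : ℚ_[p]) ≠ 0 := Nat.cast_ne_zero.2 p.centralBinom_ne_zero
  rw [sum_Icc_four_pow_div_mul_choose, Nat.sub_add_cancel (Fact.out : p.Prime).one_le, hc]
  field_simp
  linear_combination (p : ℚ_[p]) * hm'
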